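/- arXiv:1401.1472 — 6 statements merged into one kernel-verified Lean document; each statement's English description precedes it below -/
import Mathlib

section
/- Let 𝓑 = {B(c₁,r₁),...,B(cₙ,rₙ)} be pairwise disjoint balls in ℝ^d with centers C = {c₁,...,cₙ}, and let ℓ be an integer with 2 ≤ ℓ ≤ n. Then r_C(ℓ) ≤ r_𝓑(ℓ) ≤ 3·r_C(ℓ), where r_C(ℓ) is the radius of the smallest ball containing at least ℓ points of C, and r_𝓑(ℓ) is the radius of the smallest ball completely containing at least ℓ balls of 𝓑. -/
/-- `r_C(ℓ)`: radius of the smallest ball containing at least `ℓ` of the points `c i`. -/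
noncomputable def smallestPtsRadius {d n : ℕ} (c : Fin n → EuclideanSpace ℝ (Fin d))
    (ℓ : ℕ) : ℝ :=
  sInf {ρ : ℝ | 0 ≤ ρ ∧ ∃ w : EuclideanSpace ℝ (Fin d),
    ℓ ≤ {i : Fin n | c i ∈ Metric.closedBall w ρ}.ncard}

/-- `r_𝓑(ℓ)`: radius of the smallest ball completely containing at least `ℓ` of the
balls `B (c i) (r i)`. -/
noncomputable def smallestBallsRadius {d n : ℕ} (c : Fin n → EuclideanSpace ℝ (Fin d))
    (r : Fin n → ℝ) (ℓ : ℕ) : ℝ :=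
  sInf {ρ : ℝ | 0 ≤ ρ ∧ ∃ w : EuclideanSpace ℝ (Fin d),
    ℓ ≤ {i : Fin n | Metric.closedBall (c i) (r i) ⊆ Metric.closedBall w ρ}.ncard}

/-- For pairwise disjoint balls and `2 ≤ ℓ ≤ n`:
`r_C(ℓ) ≤ r_𝓑(ℓ) ≤ 3 r_C(ℓ)`. -/
theorem stmt_5 (d n : ℕ) (c : Fin n → EuclideanSpace ℝ (Fin d)) (r : Fin n → ℝ)
    (hr : ∀ i, 0 ≤ r i)
    (hdisj : ∀ i j, i ≠ j →
      Disjoint (Metric.closedBall (c i) (r i)) (Metric.closedBall (c j) (r j)))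
    (ℓ : ℕ) (hl2 : 2 ≤ ℓ) (hln : ℓ ≤ n) :
    smallestPtsRadius c ℓ ≤ smallestBallsRadius c r ℓ ∧
      smallestBallsRadius c r ℓ ≤ 3 * smallestPtsRadius c ℓ := by
  have hn : 0 < n := lt_of_lt_of_le (by omega) hln
  set Sp := {ρ : ℝ | 0 ≤ ρ ∧ ∃ w : EuclideanSpace ℝ (Fin d),
    ℓ ≤ {i : Fin n | c i ∈ Metric.closedBall w ρ}.ncard} with hSp
  set Sb := {ρ : ℝ | 0 ≤ ρ ∧ ∃ w : EuclideanSpace ℝ (Fin d),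
    ℓ ≤ {i : Fin n | Metric.closedBall (c i) (r i) ⊆ Metric.closedBall w ρ}.ncard} with hSb
  have hbp : BddBelow Sp := ⟨0, fun ρ hρ => hρ.1⟩
  have hbb : BddBelow Sb := ⟨0, fun ρ hρ => hρ.1⟩
  -- Sb nonempty
  have i0 : Fin n := ⟨0, hn⟩
  have hne : Sb.Nonempty := by
    refine ⟨∑ j, (dist (c j) (c i0) + r j), ?_, c i0, ?_⟩
    · exact Finset.sum_nonneg fun j _ => add_nonneg dist_nonneg (hr j)
    · have : {i : Fin n | Metric.closedBall (c i) (r i) ⊆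
          Metric.closedBall (c i0) (∑ j, (dist (c j) (c i0) + r j))} = Set.univ := by
        ext i
        simp only [Set.mem_setOf_eq, Set.mem_univ, iff_true]
        intro x hx
        simp only [Metric.mem_closedBall] at hx ⊢
        have h1 : dist (c i) (c i0) + r i ≤ ∑ j, (dist (c j) (c i0) + r j) :=
          Finset.single_le_sum (fun j _ => add_nonneg dist_nonneg (hr j))
            (Finset.mem_univ i)
        calc dist x (c i0) ≤ dist x (c i) + dist (c i) (c i0) := dist_triangle _ _ _
          _ ≤ r i + dist (c i) (c i0) := by linarith
          _ ≤ ∑ j, (dist (c j) (c i0) + r j) := by linarith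
      rw [this, Set.ncard_univ]
      simpa using hln
  have hsub : Sb ⊆ Sp := by
    rintro ρ ⟨hρ0, w, hw⟩
    refine ⟨hρ0, w, le_trans hw ?_⟩
    refine Set.ncard_le_ncard ?_ (Set.toFinite _)
    intro i hi
    exact hi (Metric.mem_closedBall_self (hr i))
  have hneP : Sp.Nonempty := hne.mono hsub
  constructor
  · exact csInf_le_csInf hbp hne hsub
  · have key : ∀ ρ ∈ Sp, smallestBallsRadius c r ℓ ≤ 3 * ρ := by
      rintro ρ ⟨hρ0, w, hw⟩
      refine csInf_le hbb ⟨by linarith, w, le_trans hw ?_⟩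
      refine Set.ncard_le_ncard ?_ (Set.toFinite _)
      intro i hi
      simp only [Set.mem_setOf_eq, Metric.mem_closedBall] at hi ⊢
      -- find another index in the ball
      obtain ⟨j, hj, hji⟩ := Set.exists_ne_of_one_lt_ncard (lt_of_lt_of_le (by omega) hw) i
      simp only [Set.mem_setOf_eq, Metric.mem_closedBall] at hj
      have hd := (disjoint_closedBall_closedBall_iff (hr i) (hr j)).mp
        (hdisj i j (Ne.symm hji))
      have hcc : dist (c i) (c j) ≤ 2 * ρ := by
        calc dist (c i) (c j) ≤ dist (c i) w + dist w (c j) := dist_triangle _ _ _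
          _ ≤ ρ + ρ := by rw [dist_comm w (c j)]; linarith
          _ = 2 * ρ := by ring
      have hri : r i ≤ 2 * ρ := by have := hr j; linarith
      intro x hx
      simp only [Metric.mem_closedBall] at hx ⊢
      calc dist x w ≤ dist x (c i) + dist (c i) w := dist_triangle _ _ _
        _ ≤ 3 * ρ := by linarith
    have : smallestBallsRadius c r ℓ / 3 ≤ sInf Sp :=
      le_csInf hneP fun ρ hρ => by have := key ρ hρ; linarith
    have h3 : smallestPtsRadius c ℓ = sInf Sp := rfl
    rw [h3]; linarith
end

section
/- Let 𝓑 be a set of pairwise disjoint closed balls in ℝ^d, and suppose the ball b = B(q, r) intersects at least k balls of 𝓑. Then among any k balls of 𝓑 nearest to q (in the point-to-ball distance), at least max(0, k - c_d) of them have radius at most r, where c_d is the maximum number of pairwise disjoint balls of radius ≥ r that can intersect a ball of radius r in ℝ^d. Moreover, the centers of all these small balls lie in B(q, 2r). -/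
lemma ball_inter_nonempty {E : Type*} [NormedAddCommGroup E] [NormedSpace ℝ E]
    {a b : E} {s t : ℝ} (hs : 0 ≤ s) (ht : 0 ≤ t) (h : dist a b ≤ s + t) :
    (Metric.closedBall a s ∩ Metric.closedBall b t).Nonempty := by
  by_cases hD : dist a b = 0
  · exact ⟨a, by simpa using hs, by simp [Metric.mem_closedBall, dist_comm, hD.le.trans ht]⟩
  · have hD' : 0 < dist a b := lt_of_le_of_ne dist_nonneg (Ne.symm hD)
    set D := dist a b with hDdef
    refine ⟨a + (min s D / D) • (b - a), ?_, ?_⟩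
    · rw [Metric.mem_closedBall, dist_eq_norm]
      rw [add_sub_cancel_left, norm_smul, Real.norm_eq_abs, abs_of_nonneg (by positivity)]
      have hnb : ‖b - a‖ = D := by rw [hDdef, dist_comm, dist_eq_norm]
      rw [hnb, div_mul_cancel₀ _ hD]
      exact min_le_left _ _
    · rw [Metric.mem_closedBall, dist_eq_norm]
      have key : a + (min s D / D) • (b - a) - b = -((1 - min s D / D) • (b - a)) := by
        rw [sub_smul, one_smul]; abel
      rw [key, norm_neg, norm_smul, Real.norm_eq_abs]
      have hnb : ‖b - a‖ = D := by rw [hDdef, dist_comm, dist_eq_norm]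
      have h1 : min s D / D ≤ 1 := div_le_one_of_le₀ (min_le_right _ _) hD'.le
      rw [abs_of_nonneg (by linarith), hnb, sub_mul, one_mul, div_mul_cancel₀ _ hD]
      rcases le_total s D with hsD | hsD
      · rw [min_eq_left hsD]; linarith
      · rw [min_eq_right hsD]; linarith

/-- Distance from a point `q` to the ball `B(c, r)`. -/
noncomputable def ballDist {d : ℕ} (q c : EuclideanSpace ℝ (Fin d)) (r : ℝ) : ℝ :=
  max (‖q - c‖ - r) 0

/-- If `B(q, ρ)` intersects at least `k` balls of a pairwise disjoint family `𝓑`,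
then among any `k` balls of `𝓑` nearest to `q`, at least `max (0, k - c_d)` have
radius at most `ρ`, and the centers of all these small balls lie in `B(q, 2ρ)`.
Here `cd` is the packing constant: the maximum number of pairwise disjoint balls of
radius `≥ ρ` intersecting a ball of radius `ρ`. -/
theorem stmt_6 (d n : ℕ) (c : Fin n → EuclideanSpace ℝ (Fin d)) (r : Fin n → ℝ)
    (hr : ∀ i, 0 ≤ r i)
    (hdisj : ∀ i j, i ≠ j →
      Disjoint (Metric.closedBall (c i) (r i)) (Metric.closedBall (c j) (r j)))
    (q : EuclideanSpace ℝ (Fin d)) (ρ : ℝ) (hρ : 0 < ρ) (k : ℕ) (hkn : k ≤ n)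
    (cd : ℕ)
    (hcd : ∀ (p : EuclideanSpace ℝ (Fin d)) (m : ℕ)
        (w : Fin m → EuclideanSpace ℝ (Fin d)) (s : Fin m → ℝ),
      (∀ i, ρ ≤ s i) →
      (∀ i j, i ≠ j →
        Disjoint (Metric.closedBall (w i) (s i)) (Metric.closedBall (w j) (s j))) →
      (∀ i, (Metric.closedBall (w i) (s i) ∩ Metric.closedBall p ρ).Nonempty) →
      m ≤ cd)
    (hk : k ≤ {i : Fin n |
      (Metric.closedBall (c i) (r i) ∩ Metric.closedBall q ρ).Nonempty}.ncard)
    (S : Finset (Fin n)) (hScard : S.card = k)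
    (hnear : ∀ i ∈ S, ∀ j ∉ S, ballDist q (c i) (r i) ≤ ballDist q (c j) (r j)) :
    k - cd ≤ (S.filter fun i => r i ≤ ρ).card ∧
      ∀ i ∈ S, r i ≤ ρ → c i ∈ Metric.closedBall q (2 * ρ) := by
  classical
  set T : Set (Fin n) := {i : Fin n |
    (Metric.closedBall (c i) (r i) ∩ Metric.closedBall q ρ).Nonempty} with hTdef
  rw [Set.ncard_eq_toFinset_card' T] at hk
  have hmemT : ∀ i : Fin n, i ∈ T ↔ dist (c i) q ≤ r i + ρ := by
    intro i
    constructor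
    · exact fun h => Metric.dist_le_add_of_nonempty_closedBall_inter_closedBall h
    · exact fun h => ball_inter_nonempty (hr i) hρ.le h
  -- every selected ball is within distance ρ of q
  have hclose : ∀ i ∈ S, dist (c i) q ≤ r i + ρ := by
    intro i hi
    by_contra hgt
    push_neg at hgt
    have hiT : i ∉ T := fun h => absurd ((hmemT i).1 h) (not_le.2 hgt)
    have hTS : ¬ T.toFinset ⊆ S := by
      intro hsub
      have hcard : S.card ≤ T.toFinset.card := by rw [hScard]; exact hk
      have := Finset.eq_of_subset_of_card_le hsub hcard
      exact hiT (by rw [← Set.mem_toFinset, this]; exact hi)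
    obtain ⟨j, hjT, hjS⟩ := Finset.not_subset.1 hTS
    have hj : dist (c j) q ≤ r j + ρ := (hmemT j).1 (Set.mem_toFinset.1 hjT)
    have h1 := hnear i hi j hjS
    unfold ballDist at h1
    rw [dist_eq_norm, norm_sub_rev] at hgt hj
    have hbi : ρ < max (‖q - c i‖ - r i) 0 :=
      lt_of_lt_of_le (by linarith) (le_max_left _ _)
    have hbj : max (‖q - c j‖ - r j) 0 ≤ ρ := max_le (by linarith) hρ.le
    linarith
  constructor
  · -- count the big balls
    set B : Finset (Fin n) := S.filter (fun i => ¬ r i ≤ ρ) with hBdef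
    have hB : B.card ≤ cd := by
      have e := B.equivFin
      refine hcd q B.card (fun t => c (e.symm t)) (fun t => r (e.symm t)) ?_ ?_ ?_
      · intro t
        have := (Finset.mem_filter.1 (e.symm t).2).2
        linarith [not_le.1 this]
      · intro t t' htt'
        refine hdisj _ _ (fun h => htt' ?_)
        have : e.symm t = e.symm t' := Subtype.coe_injective h
        simpa using congrArg e this
      · intro t
        exact ball_inter_nonempty (hr _) hρ.le
          (hclose _ (Finset.mem_filter.1 (e.symm t).2).1)
    have hsplit : (S.filter fun i => r i ≤ ρ).card + B.card = k := by
      rw [hBdef, Finset.card_filter_add_card_filter_not, hScard]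
    omega
  · intro i hi hri
    have := hclose i hi
    rw [Metric.mem_closedBall]
    linarith
end

section
/- Let 𝓑 be a set of n pairwise disjoint balls in ℝ^d with center set C, let q ∈ ℝ^d, let k ≤ n, and let γ = min(k, c_d). Then d_{k-γ}(C, q)/2 ≤ d_k(𝓑, q), where d_{k-γ}(C, q) is the distance from q to its (k-γ)-th nearest center and d_k(𝓑, q) is the k-th nearest ball distance (with the convention that when k = γ the left side is 0). -/
/-- The `k`-th smallest distance from `q` to the balls `B (c i) (r i)`.
Taking all radii `0` gives the `k`-th nearest center distance. -/
noncomputable def kthDist {d n : ℕ} (c : Fin n → EuclideanSpace ℝ (Fin d))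
    (r : Fin n → ℝ) (k : ℕ) (q : EuclideanSpace ℝ (Fin d)) : ℝ :=
  sInf {x : ℝ | 0 ≤ x ∧ k ≤ {i : Fin n | ballDist q (c i) (r i) ≤ x}.ncard}

open Filter Topology Metric

section KthSmallest

variable {ι : Type*} [Finite ι]

theorem eventually_nhdsGT_setOf_le_eq (g : ι → ℝ) (τ : ℝ) :
    ∀ᶠ x in 𝓝[>] τ, {i | g i ≤ x} = {i | g i ≤ τ} := by
  have h : ∀ i, ∀ᶠ x in 𝓝[>] τ, (g i ≤ x ↔ g i ≤ τ) := by
    intro i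
    rcases le_or_gt (g i) τ with hi | hi
    · filter_upwards [self_mem_nhdsWithin] with x hx
      exact iff_of_true (hi.trans hx.le) hi
    · filter_upwards [Ioo_mem_nhdsGT hi] with x hx
      exact iff_of_false (not_le.2 hx.2) (not_le.2 hi)
  filter_upwards [eventually_all.2 h] with x hx
  ext i
  exact hx i

theorem csInf_mem_setOf_le_ncard (g : ι → ℝ) {k : ℕ} (hk : k ≤ Nat.card ι) :
    sInf {x | 0 ≤ x ∧ k ≤ {i | g i ≤ x}.ncard} ∈ {x | 0 ≤ x ∧ k ≤ {i | g i ≤ x}.ncard} := by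
  set S := {x | 0 ≤ x ∧ k ≤ {i | g i ≤ x}.ncard}
  have hne : S.Nonempty := by
    obtain ⟨b, hb⟩ := Finite.bddAbove_range g
    have hall : {i | g i ≤ max b 0} = Set.univ :=
      Set.eq_univ_of_forall fun i => (hb ⟨i, rfl⟩).trans (le_max_left b 0)
    exact ⟨max b 0, le_max_right _ _, by rwa [hall, Set.ncard_univ]⟩
  have hτ : 0 ≤ sInf S := le_csInf hne fun _ hx => hx.1
  have hgt : ∀ᶠ x in 𝓝[>] sInf S, x ∈ S := by
    refine eventually_nhdsWithin_of_forall fun x (hx : sInf S < x) => ?_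
    obtain ⟨y, ⟨hy0, hyk⟩, hyx⟩ := exists_lt_of_csInf_lt hne hx
    exact ⟨hy0.trans hyx.le, hyk.trans (Set.ncard_le_ncard fun i hi => le_trans hi hyx.le)⟩
  obtain ⟨x, hxS, hx⟩ := (hgt.and (eventually_nhdsGT_setOf_le_eq g (sInf S))).exists
  exact ⟨hτ, hx ▸ hxS.2⟩

end KthSmallest

section BallDist

variable {d : ℕ}

theorem ballDist_zero_right (q c : EuclideanSpace ℝ (Fin d)) : ballDist q c 0 = ‖q - c‖ := by
  simp [ballDist]

theorem ballDist_le_iff {q c : EuclideanSpace ℝ (Fin d)} {r τ : ℝ} (hτ : 0 ≤ τ) :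
    ballDist q c r ≤ τ ↔ ‖q - c‖ ≤ r + τ := by
  rw [ballDist, max_le_iff, sub_le_iff_le_add']
  exact and_iff_left hτ

variable {n : ℕ} (c : Fin n → EuclideanSpace ℝ (Fin d)) (r : Fin n → ℝ)
  {k : ℕ} (q : EuclideanSpace ℝ (Fin d))

theorem kthDist_le {x : ℝ} (hx : 0 ≤ x) (h : k ≤ {i | ballDist q (c i) (r i) ≤ x}.ncard) :
    kthDist c r k q ≤ x :=
  csInf_le ⟨0, fun _ hy => hy.1⟩ ⟨hx, h⟩

theorem kthDist_nonneg_and_le_ncard (hkn : k ≤ n) :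
    0 ≤ kthDist c r k q ∧ k ≤ {i | ballDist q (c i) (r i) ≤ kthDist c r k q}.ncard :=
  csInf_mem_setOf_le_ncard _ (by simpa using hkn)

end BallDist

/-- `PackingBound E cd`: at most `cd` pairwise disjoint closed balls of radius at least `ρ`
meet a closed ball of radius `ρ`; the packing constant `c_d` is the least such `cd` for `ℝ^d`. -/
def PackingBound (E : Type*) [PseudoMetricSpace E] (cd : ℕ) : Prop :=
  ∀ (p : E) (ρ : ℝ), 0 < ρ → ∀ (m : ℕ) (w : Fin m → E) (s : Fin m → ℝ),
    (∀ i, ρ ≤ s i) →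
    (∀ i j, i ≠ j → Disjoint (closedBall (w i) (s i)) (closedBall (w j) (s j))) →
    (∀ i, (closedBall (w i) (s i) ∩ closedBall p ρ).Nonempty) →
    m ≤ cd

theorem PackingBound.ncard_le {E : Type*} [PseudoMetricSpace E] {cd : ℕ}
    (h : PackingBound E cd) {ι : Type*} {s : Set ι} (hs : s.Finite) {w : ι → E}
    {rad : ι → ℝ} {p : E} {ρ : ℝ} (hρ : 0 < ρ) (hrad : ∀ i ∈ s, ρ ≤ rad i)
    (hdisj : s.PairwiseDisjoint fun i => closedBall (w i) (rad i))
    (hmeet : ∀ i ∈ s, (closedBall (w i) (rad i) ∩ closedBall p ρ).Nonempty) :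
    s.ncard ≤ cd := by
  have := hs.to_subtype
  let e := (Finite.equivFin s).symm
  rw [← Nat.card_coe_set_eq]
  exact h p ρ hρ _ (fun j => w (e j)) (fun j => rad (e j)) (fun j => hrad _ (e j).2)
    (fun i j hij => hdisj (e i).2 (e j).2 fun h => hij (e.injective (Subtype.ext h)))
    (fun j => hmeet _ (e j).2)

theorem ncard_far_centers_le {d cd : ℕ} (hcd : PackingBound (EuclideanSpace ℝ (Fin d)) cd)
    {ι : Type*} [Finite ι] (c : ι → EuclideanSpace ℝ (Fin d)) (r : ι → ℝ)
    (hdisj : Pairwise fun i j => Disjoint (closedBall (c i) (r i)) (closedBall (c j) (r j)))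
    (q : EuclideanSpace ℝ (Fin d)) {τ : ℝ} (hτ : 0 ≤ τ) :
    {i | ballDist q (c i) (r i) ≤ τ ∧ 2 * τ < ‖q - c i‖}.ncard ≤ cd := by
  set B := {i | ballDist q (c i) (r i) ≤ τ ∧ 2 * τ < ‖q - c i‖}
  have hnear : ∀ i ∈ B, ‖q - c i‖ ≤ r i + τ := fun i hi => (ballDist_le_iff hτ).1 hi.1
  have hlarge : ∀ i ∈ B, τ < r i := fun i hi => by linarith [hnear i hi, hi.2]
  rcases B.eq_empty_or_nonempty with hB | hB
  · simp [hB]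
  -- The smallest far radius `r i₀` exceeds `τ ≥ 0`, so it is a positive scale at which every
  -- far ball still meets `B(q, r i₀)`.
  obtain ⟨i₀, hi₀, hmin⟩ := B.exists_min_image r B.toFinite hB
  refine hcd.ncard_le (p := q) B.toFinite (hτ.trans_lt (hlarge i₀ hi₀)) hmin
    (fun i _ j _ hij => hdisj hij) fun i hi => ?_
  obtain ⟨y, hiy, hyq⟩ := exists_dist_le_le (hτ.trans (hlarge i hi).le)
    (hτ.trans (hlarge i₀ hi₀).le) (z := q) (x := c i)
    (by rw [dist_comm, dist_eq_norm]; linarith [hnear i hi, hlarge i₀ hi₀])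
  exact ⟨y, by rwa [mem_closedBall, dist_comm], hyq⟩

theorem stmt_7_general (d n : ℕ) (c : Fin n → EuclideanSpace ℝ (Fin d)) (r : Fin n → ℝ)
    (hdisj : ∀ i j, i ≠ j →
      Disjoint (Metric.closedBall (c i) (r i)) (Metric.closedBall (c j) (r j)))
    (k : ℕ) (hkn : k ≤ n) (cd : ℕ)
    (hcd : ∀ (p : EuclideanSpace ℝ (Fin d)) (ρ : ℝ), 0 < ρ → ∀ (m : ℕ)
        (w : Fin m → EuclideanSpace ℝ (Fin d)) (s : Fin m → ℝ),
      (∀ i, ρ ≤ s i) →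
      (∀ i j, i ≠ j →
        Disjoint (Metric.closedBall (w i) (s i)) (Metric.closedBall (w j) (s j))) →
      (∀ i, (Metric.closedBall (w i) (s i) ∩ Metric.closedBall p ρ).Nonempty) →
      m ≤ cd)
    (q : EuclideanSpace ℝ (Fin d)) :
    kthDist c (fun _ => (0 : ℝ)) (k - min k cd) q / 2 ≤ kthDist c r k q := by
  obtain ⟨hτ, hk⟩ := kthDist_nonneg_and_le_ncard c r q hkn
  set τ := kthDist c r k q
  have hfar := ncard_far_centers_le hcd c r (fun i j h => hdisj i j h) q hτ
  have hcover : {i | ballDist q (c i) (r i) ≤ τ} ⊆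
      {i | ‖q - c i‖ ≤ 2 * τ} ∪ {i | ballDist q (c i) (r i) ≤ τ ∧ 2 * τ < ‖q - c i‖} :=
    fun i hi => (le_or_gt ‖q - c i‖ (2 * τ)).imp id fun h => ⟨hi, h⟩
  have hcount := hk.trans ((Set.ncard_le_ncard hcover).trans (Set.ncard_union_le _ _))
  have hnear : kthDist c (fun _ => 0) (k - min k cd) q ≤ 2 * τ :=
    kthDist_le _ _ q (by positivity) (by simp only [ballDist_zero_right]; omega)
  linarith

/-- With `γ = min k c_d`, one has `d_{k-γ}(C, q) / 2 ≤ d_k(𝓑, q)`, where `C` is the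
set of centers of the pairwise disjoint balls `𝓑` and `cd` is the packing constant. -/
theorem stmt_7 (d n : ℕ) (c : Fin n → EuclideanSpace ℝ (Fin d)) (r : Fin n → ℝ)
    (hr : ∀ i, 0 ≤ r i)
    (hdisj : ∀ i j, i ≠ j →
      Disjoint (Metric.closedBall (c i) (r i)) (Metric.closedBall (c j) (r j)))
    (k : ℕ) (hk1 : 1 ≤ k) (hkn : k ≤ n) (cd : ℕ)
    (hcd : ∀ (p : EuclideanSpace ℝ (Fin d)) (ρ : ℝ), 0 < ρ → ∀ (m : ℕ)
        (w : Fin m → EuclideanSpace ℝ (Fin d)) (s : Fin m → ℝ),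
      (∀ i, ρ ≤ s i) →
      (∀ i j, i ≠ j →
        Disjoint (Metric.closedBall (w i) (s i)) (Metric.closedBall (w j) (s j))) →
      (∀ i, (Metric.closedBall (w i) (s i) ∩ Metric.closedBall p ρ).Nonempty) →
      m ≤ cd)
    (q : EuclideanSpace ℝ (Fin d)) :
    kthDist c (fun _ => (0 : ℝ)) (k - min k cd) q / 2 ≤ kthDist c r k q :=
  stmt_7_general d n c r hdisj k hkn cd hcd q
end

section
/- Let 𝓑 be a finite set of balls in ℝ^d, q a query point, k an integer, and suppose a cell □ ⊆ ℝ^d contains q and has diameter at most ε·d_k(𝓑,q)/4, where 0 < ε < 1. Let p ∈ □ be any representative point and let b ∈ 𝓑 be a ball with d(p,b) ≤ (1+ε/4)·d_k(𝓑,p). Then (1-ε)·d_k(𝓑,q) ≤ d(q,b) ≤ (1+ε)·d_k(𝓑,q). -/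
lemma ballDist_nonneg {d : ℕ} (q c : EuclideanSpace ℝ (Fin d)) (r : ℝ) :
    0 ≤ ballDist q c r := le_max_right _ _

lemma ballDist_lip {d : ℕ} (q q' c : EuclideanSpace ℝ (Fin d)) (r : ℝ) :
    ballDist q c r ≤ ballDist q' c r + ‖q - q'‖ := by
  have h : ‖q - c‖ ≤ ‖q - q'‖ + ‖q' - c‖ := norm_sub_le_norm_sub_add_norm_sub q q' c
  have h2 : ‖q' - c‖ - r ≤ max (‖q' - c‖ - r) 0 := le_max_left _ _
  have h3 : (0:ℝ) ≤ max (‖q' - c‖ - r) 0 := le_max_right _ _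
  unfold ballDist
  apply max_le
  · linarith
  · positivity

lemma bddBelow_kthSet {d n : ℕ} (c : Fin n → EuclideanSpace ℝ (Fin d))
    (r : Fin n → ℝ) (k : ℕ) (q : EuclideanSpace ℝ (Fin d)) :
    BddBelow {x : ℝ | 0 ≤ x ∧ k ≤ {i : Fin n | ballDist q (c i) (r i) ≤ x}.ncard} :=
  ⟨0, fun _ hx => hx.1⟩

lemma kthSet_nonempty {d n : ℕ} (c : Fin n → EuclideanSpace ℝ (Fin d))
    (r : Fin n → ℝ) (k : ℕ) (hkn : k ≤ n) (hn : 0 < n) (q : EuclideanSpace ℝ (Fin d)) :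
    {x : ℝ | 0 ≤ x ∧ k ≤ {i : Fin n | ballDist q (c i) (r i) ≤ x}.ncard}.Nonempty := by
  haveI : Nonempty (Fin n) := Fin.pos_iff_nonempty.mp hn
  set f : Fin n → ℝ := fun i => ballDist q (c i) (r i) with hf
  refine ⟨Finset.univ.sup' Finset.univ_nonempty f, ?_, ?_⟩
  · obtain ⟨j⟩ := (inferInstance : Nonempty (Fin n))
    exact le_trans (ballDist_nonneg q (c j) (r j)) (Finset.le_sup' f (Finset.mem_univ j))
  · have : {i : Fin n | f i ≤ Finset.univ.sup' Finset.univ_nonempty f} = Set.univ := by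
      ext j
      simp only [Set.mem_setOf_eq, Set.mem_univ, iff_true]
      exact Finset.le_sup' f (Finset.mem_univ j)
    rw [this, Set.ncard_univ]
    simpa using hkn

lemma kthDist_mem {d n : ℕ} (c : Fin n → EuclideanSpace ℝ (Fin d))
    (r : Fin n → ℝ) (k : ℕ) (hk1 : 1 ≤ k) (hkn : k ≤ n) (q : EuclideanSpace ℝ (Fin d)) :
    0 ≤ kthDist c r k q ∧
      k ≤ {i : Fin n | ballDist q (c i) (r i) ≤ kthDist c r k q}.ncard := by
  have hn : 0 < n := lt_of_lt_of_le hk1 hkn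
  set f : Fin n → ℝ := fun i => ballDist q (c i) (r i) with hf
  set S := {x : ℝ | 0 ≤ x ∧ k ≤ {i : Fin n | f i ≤ x}.ncard} with hS
  have hne : S.Nonempty := kthSet_nonempty c r k hkn hn q
  have hbdd : BddBelow S := bddBelow_kthSet c r k q
  have ha : kthDist c r k q = sInf S := rfl
  set a := sInf S with haa
  have ha0 : 0 ≤ a := le_csInf hne fun x hx => hx.1
  refine ⟨by rw [ha]; exact ha0, ?_⟩
  rw [ha]
  by_contra hlt
  push_neg at hlt
  replace hlt : {i : Fin n | f i ≤ a}.ncard < k := hlt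
  -- the set of indices with f i > a
  set Fc : Finset (Fin n) := Finset.univ.filter (fun i => a < f i) with hFc
  have hFcne : Fc.Nonempty := by
    by_contra hemp
    rw [Finset.not_nonempty_iff_eq_empty] at hemp
    have : {i : Fin n | f i ≤ a} = Set.univ := by
      ext j
      simp only [Set.mem_setOf_eq, Set.mem_univ, iff_true]
      by_contra hj
      push_neg at hj
      have : j ∈ Fc := by simp [hFc, hj]
      simp [hemp] at this
    rw [this, Set.ncard_univ] at hlt
    simp at hlt
    omega
  set m := Fc.inf' hFcne f with hm
  have ham : a < m := by
    rw [hm]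
    exact (Finset.lt_inf'_iff hFcne).mpr fun j hj => (Finset.mem_filter.mp hj).2
  obtain ⟨x, hxS, hxm⟩ := exists_lt_of_csInf_lt hne (show sInf S < m from ham)
  have hsub : {i : Fin n | f i ≤ x} ⊆ {i : Fin n | f i ≤ a} := by
    intro j hj
    simp only [Set.mem_setOf_eq] at hj ⊢
    by_contra hja
    push_neg at hja
    have hjFc : j ∈ Fc := by simp [hFc, hja]
    have : m ≤ f j := Finset.inf'_le f hjFc
    linarith
  have := hxS.2
  have hle : {i : Fin n | f i ≤ x}.ncard ≤ {i : Fin n | f i ≤ a}.ncard :=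
    Set.ncard_le_ncard hsub (Set.toFinite _)
  omega

lemma kthDist_lip {d n : ℕ} (c : Fin n → EuclideanSpace ℝ (Fin d))
    (r : Fin n → ℝ) (k : ℕ) (hk1 : 1 ≤ k) (hkn : k ≤ n)
    (q q' : EuclideanSpace ℝ (Fin d)) :
    kthDist c r k q ≤ kthDist c r k q' + ‖q - q'‖ := by
  obtain ⟨h0, hcount⟩ := kthDist_mem c r k hk1 hkn q'
  apply csInf_le (bddBelow_kthSet c r k q)
  constructor
  · positivity
  · refine le_trans hcount (Set.ncard_le_ncard ?_ (Set.toFinite _))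
    intro j hj
    simp only [Set.mem_setOf_eq] at hj ⊢
    calc ballDist q (c j) (r j) ≤ ballDist q' (c j) (r j) + ‖q - q'‖ :=
          ballDist_lip q q' (c j) (r j)
      _ ≤ kthDist c r k q' + ‖q - q'‖ := by linarith

/-- If the query point `q` lies in a cell of diameter at most `ε d_k(𝓑, q) / 4`,
`p` is a representative point of the cell, and the ball `b i` realizes a
`(1 + ε/4)`-approximate `k`-th nearest neighbor distance at `p`, then `b i` is a
`(1 ± ε)`-approximate `k`-th nearest neighbor of `q`. -/
theorem stmt_10 (d n : ℕ) (c : Fin n → EuclideanSpace ℝ (Fin d)) (r : Fin n → ℝ)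
    (k : ℕ) (hk1 : 1 ≤ k) (hkn : k ≤ n)
    (ε : ℝ) (hε0 : 0 < ε) (hε1 : ε < 1)
    (s : Set (EuclideanSpace ℝ (Fin d))) (hbdd : Bornology.IsBounded s)
    (q p : EuclideanSpace ℝ (Fin d)) (hq : q ∈ s) (hp : p ∈ s)
    (hdiam : Metric.diam s ≤ ε * kthDist c r k q / 4)
    (i : Fin n)
    (hlb : kthDist c r k p ≤ ballDist p (c i) (r i))
    (hub : ballDist p (c i) (r i) ≤ (1 + ε / 4) * kthDist c r k p) :
    (1 - ε) * kthDist c r k q ≤ ballDist q (c i) (r i) ∧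
      ballDist q (c i) (r i) ≤ (1 + ε) * kthDist c r k q := by
  set dq := kthDist c r k q with hdq
  set dp := kthDist c r k p with hdp
  have hdq0 : 0 ≤ dq := (kthDist_mem c r k hk1 hkn q).1
  have hnorm : ‖q - p‖ ≤ ε * dq / 4 := by
    have := Metric.dist_le_diam_of_mem hbdd hq hp
    rw [dist_eq_norm] at this
    linarith
  have hnorm' : ‖p - q‖ = ‖q - p‖ := norm_sub_rev p q
  have h1 : dq ≤ dp + ‖q - p‖ := kthDist_lip c r k hk1 hkn q p
  have h2 : dp ≤ dq + ‖q - p‖ := by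
    have := kthDist_lip c r k hk1 hkn p q; rw [hnorm'] at this; exact this
  have h3 : ballDist q (c i) (r i) ≤ ballDist p (c i) (r i) + ‖q - p‖ :=
    ballDist_lip q p (c i) (r i)
  have h4 : ballDist p (c i) (r i) ≤ ballDist q (c i) (r i) + ‖q - p‖ := by
    have := ballDist_lip p q (c i) (r i); rw [hnorm'] at this; exact this
  constructor
  · nlinarith [mul_nonneg hε0.le hdq0]
  · have h5 : (1 + ε / 4) * dp ≤ (1 + ε / 4) * (dq + ε * dq / 4) := by
      apply mul_le_mul_of_nonneg_left _ (by linarith)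
      linarith
    nlinarith [mul_nonneg (mul_nonneg hε0.le (by linarith : (0:ℝ) ≤ 1 - ε)) hdq0]
end

section
/- Let 𝓑 be a set of n ≥ k pairwise disjoint balls in ℝ^d with k > 2c_d, let q ∈ ℝ^d, and set R = d_k(𝓑,q), the k-th nearest ball distance. Then there exist at least k - c_d balls among the k nearest balls to q, each of radius at most R, all completely contained in the ball B(q, 3R). -/
/-- Two closed balls with `dist x y ≤ a + b` intersect (real normed space). -/
lemma aux_closedBall_inter {E : Type*} [NormedAddCommGroup E] [NormedSpace ℝ E]
    (x y : E) (a b : ℝ) (ha : 0 ≤ a) (hb : 0 ≤ b) (h : dist x y ≤ a + b) :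
    (Metric.closedBall x a ∩ Metric.closedBall y b).Nonempty := by
  by_cases hd : dist x y ≤ a
  · exact ⟨y, by simpa [Metric.mem_closedBall, dist_comm] using hd, by
      simp [Metric.mem_closedBall, hb]⟩
  · push_neg at hd
    have hD : 0 < dist x y := lt_of_le_of_lt ha hd
    set t : ℝ := a / dist x y with ht
    have ht0 : 0 ≤ t := div_nonneg ha hD.le
    have ht1 : t ≤ 1 := by
      rw [div_le_one hD]; exact hd.le
    refine ⟨x + t • (y - x), ?_, ?_⟩
    · have hnorm : dist (x + t • (y - x)) x = ‖t • (y - x)‖ := by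
        rw [dist_eq_norm, add_sub_cancel_left]
      have hyx : ‖y - x‖ = dist x y := by rw [dist_eq_norm, ← norm_neg, neg_sub]
      rw [Metric.mem_closedBall, hnorm, norm_smul, Real.norm_eq_abs,
        abs_of_nonneg ht0, hyx, ht, div_mul_cancel₀ _ hD.ne']
    · have heq : x + t • (y - x) - y = (1 - t) • (x - y) := by
        rw [sub_smul, one_smul, smul_sub, smul_sub]; abel
      rw [Metric.mem_closedBall, dist_eq_norm, heq, norm_smul, Real.norm_eq_abs,
        abs_of_nonneg (by linarith), ← dist_eq_norm]
      have : (1 - t) * dist x y = dist x y - a := by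
        rw [ht]; field_simp
      rw [this]; linarith

/-- With `R = d_k(𝓑, q)` and `k > 2 c_d`, there are at least `k - c_d` balls among
the `k` nearest balls to `q` (i.e. at distance at most `R`), each of radius at most
`R` and completely contained in `B(q, 3R)`. Here `cd` is the packing constant. -/
theorem stmt_12 (d n : ℕ) (c : Fin n → EuclideanSpace ℝ (Fin d)) (r : Fin n → ℝ)
    (hr : ∀ i, 0 ≤ r i)
    (hdisj : ∀ i j, i ≠ j →
      Disjoint (Metric.closedBall (c i) (r i)) (Metric.closedBall (c j) (r j)))
    (k : ℕ) (hkn : k ≤ n) (cd : ℕ) (hk2cd : 2 * cd < k)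
    (hcd : ∀ (p : EuclideanSpace ℝ (Fin d)) (ρ : ℝ), 0 < ρ → ∀ (m : ℕ)
        (w : Fin m → EuclideanSpace ℝ (Fin d)) (s : Fin m → ℝ),
      (∀ i, ρ ≤ s i) →
      (∀ i j, i ≠ j →
        Disjoint (Metric.closedBall (w i) (s i)) (Metric.closedBall (w j) (s j))) →
      (∀ i, (Metric.closedBall (w i) (s i) ∩ Metric.closedBall p ρ).Nonempty) →
      m ≤ cd)
    (q : EuclideanSpace ℝ (Fin d)) :
    ∃ S : Finset (Fin n), k - cd ≤ S.card ∧
      (∀ i ∈ S, ballDist q (c i) (r i) ≤ kthDist c r k q) ∧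
      (∀ i ∈ S, r i ≤ kthDist c r k q) ∧
      (∀ i ∈ S, Metric.closedBall (c i) (r i) ⊆
        Metric.closedBall q (3 * kthDist c r k q)) := by
  set R := kthDist c r k q with hRdef
  have hbd0 : ∀ i, 0 ≤ ballDist q (c i) (r i) := fun i => le_max_right _ _
  set T := {x : ℝ | 0 ≤ x ∧ k ≤ {i : Fin n | ballDist q (c i) (r i) ≤ x}.ncard}
    with hTdef
  have hcard : ∀ x : ℝ, {i : Fin n | ballDist q (c i) (r i) ≤ x}.ncard =
      (Finset.univ.filter (fun i => ballDist q (c i) (r i) ≤ x)).card := by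
    intro x
    rw [Set.ncard_eq_toFinset_card']
    congr 1
    ext i; simp
  -- T is nonempty
  obtain ⟨x0, hx0⟩ := (Set.finite_range fun i => ballDist q (c i) (r i)).bddAbove
  have hTne : T.Nonempty := by
    refine ⟨max x0 0, le_max_right _ _, ?_⟩
    have hall : {i : Fin n | ballDist q (c i) (r i) ≤ max x0 0} = Set.univ := by
      ext i
      simp only [Set.mem_setOf_eq, Set.mem_univ, iff_true]
      exact le_trans (hx0 ⟨i, rfl⟩) (le_max_left _ _)
    rw [hall, Set.ncard_univ]
    simpa using hkn
  have hTbdd : BddBelow T := ⟨0, fun x hx => hx.1⟩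
  have hR0 : 0 ≤ R := le_csInf hTne fun x hx => hx.1
  -- R itself belongs to T
  have hRmem : k ≤ {i : Fin n | ballDist q (c i) (r i) ≤ R}.ncard := by
    set G := Finset.univ.filter (fun i => R < ballDist q (c i) (r i)) with hGdef
    by_cases hG : G.Nonempty
    · set ε := (G.image (fun i => ballDist q (c i) (r i) - R)).min'
        (hG.image _) with hε
      have hεmem := (G.image (fun i => ballDist q (c i) (r i) - R)).min'_mem
        (hG.image _)
      rw [Finset.mem_image] at hεmem
      obtain ⟨i0, hi0G, hi0⟩ := hεmem
      have hεpos : 0 < ε := by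
        rw [hε, ← hi0]
        have := (Finset.mem_filter.mp hi0G).2
        linarith
      have hRT : R = sInf T := rfl
      obtain ⟨x, hxT, hxlt⟩ := exists_lt_of_csInf_lt hTne
        (show sInf T < R + ε by rw [← hRT]; linarith)
      refine le_trans hxT.2 (Set.ncard_le_ncard ?_ (Set.toFinite _))
      intro i hi
      simp only [Set.mem_setOf_eq] at hi ⊢
      by_contra hiR
      push_neg at hiR
      have hiG : i ∈ G := Finset.mem_filter.mpr ⟨Finset.mem_univ _, hiR⟩
      have : ε ≤ ballDist q (c i) (r i) - R :=
        Finset.min'_le _ _ (Finset.mem_image_of_mem _ hiG)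
      linarith
    · rw [Finset.not_nonempty_iff_eq_empty, Finset.filter_eq_empty_iff] at hG
      have hall : {i : Fin n | ballDist q (c i) (r i) ≤ R} = Set.univ := by
        ext i
        simp only [Set.mem_setOf_eq, Set.mem_univ, iff_true]
        have := hG (Finset.mem_univ i)
        push_neg at this
        exact this
      rw [hall, Set.ncard_univ]
      simpa using hkn
  -- the k nearest balls
  set N := Finset.univ.filter (fun i => ballDist q (c i) (r i) ≤ R) with hNdef
  have hNcard : k ≤ N.card := by rw [← hcard]; exact hRmem
  -- distance facts for members of N
  have hdistN : ∀ i ∈ N, dist (c i) q ≤ r i + R := by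
    intro i hi
    have h1 : ballDist q (c i) (r i) ≤ R := (Finset.mem_filter.mp hi).2
    have h2 : ‖q - c i‖ - r i ≤ R := le_trans (le_max_left _ _) h1
    rw [dist_eq_norm, ← norm_neg]
    simp only [neg_sub]
    linarith
  -- balls with large radius among N
  set Big := N.filter (fun i => R < r i) with hBigdef
  have hBigcard : Big.card ≤ cd := by
    by_cases hRpos : 0 < R
    · set e : Fin Big.card → Fin n := fun j => ((Big.equivFin.symm j : Big) : Fin n)
        with he
      have heinj : Function.Injective e := fun a b hab => by
        have := Subtype.val_injective hab
        exact Big.equivFin.symm.injective this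
      have hemem : ∀ j, e j ∈ Big := fun j => (Big.equivFin.symm j).2
      refine hcd q R hRpos Big.card (fun j => c (e j)) (fun j => r (e j))
        ?_ ?_ ?_
      · intro j
        exact (le_of_lt (Finset.mem_filter.mp (hemem j)).2)
      · intro i j hij
        exact hdisj _ _ (fun h => hij (heinj h))
      · intro j
        have hjN : e j ∈ N := (Finset.mem_filter.mp (hemem j)).1
        exact aux_closedBall_inter _ _ _ _ (hr _) hR0 (hdistN _ hjN)
    · push_neg at hRpos
      have hReq : R = 0 := le_antisymm hRpos hR0
      have hqmem : ∀ i ∈ Big, q ∈ Metric.closedBall (c i) (r i) := by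
        intro i hi
        have h1 : ballDist q (c i) (r i) ≤ R := (Finset.mem_filter.mp
          (Finset.mem_filter.mp hi).1).2
        have h2 : ‖q - c i‖ - r i ≤ R := le_trans (le_max_left _ _) h1
        rw [Metric.mem_closedBall, dist_eq_norm]
        linarith [hReq ▸ h2]
      have hB1 : Big.card ≤ 1 := by
        refine Finset.card_le_one.mpr fun a ha b hb => ?_
        by_contra hab
        exact Set.disjoint_left.mp (hdisj a b hab) (hqmem a ha) (hqmem b hb)
      have hcd1 : 1 ≤ cd := by
        refine hcd q 1 one_pos 1 (fun _ => q) (fun _ => 1)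
          (fun _ => le_refl 1) (fun i j hij => absurd (Subsingleton.elim i j) hij)
          (fun i => ⟨q, by simp⟩)
      omega
  refine ⟨N \ Big, ?_, ?_, ?_, ?_⟩
  · have hsub : Big ⊆ N := Finset.filter_subset _ _
    rw [Finset.card_sdiff_of_subset hsub]
    omega
  · intro i hi
    exact (Finset.mem_filter.mp (Finset.mem_sdiff.mp hi).1).2
  · intro i hi
    obtain ⟨hiN, hiB⟩ := Finset.mem_sdiff.mp hi
    by_contra h
    push_neg at h
    exact hiB (Finset.mem_filter.mpr ⟨hiN, h⟩)
  · intro i hi x hx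
    obtain ⟨hiN, hiB⟩ := Finset.mem_sdiff.mp hi
    have hri : r i ≤ R := by
      by_contra h
      push_neg at h
      exact hiB (Finset.mem_filter.mpr ⟨hiN, h⟩)
    have h1 : dist x (c i) ≤ r i := Metric.mem_closedBall.mp hx
    have h2 : dist (c i) q ≤ r i + R := hdistN i hiN
    have : dist x q ≤ dist x (c i) + dist (c i) q := dist_triangle _ _ _
    rw [Metric.mem_closedBall]
    linarith
end

section
/- Let 𝓑 be pairwise disjoint balls in ℝ^d, q ∈ ℝ^d, and suppose for some radius ρ > 0: the ball B(q,ρ) contains at least m centers of balls in 𝓑 but fewer than m+1 centers, and no center of any ball of 𝓑 lies at distance in the open interval (ρ, ρ') from q, where ρ' > 4·d_k(𝓑,q) and ρ < d_k(𝓑,q). Then the k-th nearest ball to q has its center at distance at least ρ' from q, intersects B(q, d_k(𝓑,q)), and has radius at least ρ' - d_k(𝓑,q). -/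
/-- Suppose `B(q, ρ)` contains at least `m` but fewer than `m + 1` centers, no
center lies at distance in the open interval `(ρ, ρ')` from `q`,
`ρ' > 4 d_k(𝓑, q)` and `ρ < d_k(𝓑, q)`. Then the `k`-th nearest ball to `q` has
its center at distance at least `ρ'` from `q`, intersects `B(q, d_k(𝓑, q))`, and
has radius at least `ρ' - d_k(𝓑, q)`. -/
theorem stmt_15 (d n : ℕ) (c : Fin n → EuclideanSpace ℝ (Fin d)) (r : Fin n → ℝ)
    (hr : ∀ i, 0 ≤ r i)
    (hdisj : ∀ i j, i ≠ j →
      Disjoint (Metric.closedBall (c i) (r i)) (Metric.closedBall (c j) (r j)))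
    (q : EuclideanSpace ℝ (Fin d)) (k : ℕ) (hk1 : 1 ≤ k) (hkn : k ≤ n)
    (ρ ρ' : ℝ) (hρ : 0 < ρ) (m : ℕ)
    (hm : m ≤ {i : Fin n | c i ∈ Metric.closedBall q ρ}.ncard)
    (hm' : {i : Fin n | c i ∈ Metric.closedBall q ρ}.ncard < m + 1)
    (hgap : ∀ i, ‖q - c i‖ ∉ Set.Ioo ρ ρ')
    (hbig : 4 * kthDist c r k q < ρ')
    (hsmall : ρ < kthDist c r k q) :
    ∀ i, ballDist q (c i) (r i) = kthDist c r k q →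
      ρ' ≤ ‖q - c i‖ ∧
      (Metric.closedBall (c i) (r i) ∩
        Metric.closedBall q (kthDist c r k q)).Nonempty ∧
      ρ' - kthDist c r k q ≤ r i := by
  intro i hi
  set D := kthDist c r k q with hD
  have hD0 : 0 < D := lt_trans hρ hsmall
  set t := ‖q - c i‖ with ht
  -- ballDist ≤ t
  have hbd_le : ballDist q (c i) (r i) ≤ t := by
    unfold ballDist
    have h1 : ‖q - c i‖ - r i ≤ t := by
      have := hr i; linarith
    have h2 : (0:ℝ) ≤ t := norm_nonneg _
    exact max_le h1 h2
  have htρ : ρ < t := lt_of_lt_of_le hsmall (hi ▸ hbd_le)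
  have hρ't : ρ' ≤ t := by
    by_contra h
    push_neg at h
    exact hgap i ⟨htρ, h⟩
  -- since D > 0, ballDist = t - r i
  have hexact : t - r i = D := by
    have : max (t - r i) 0 = D := hi
    rcases max_cases (t - r i) 0 with ⟨h1, h2⟩ | ⟨h1, h2⟩
    · rw [h1] at this; exact this
    · rw [h1] at this; exact absurd this.symm (ne_of_gt hD0)
  have hri : ρ' - D ≤ r i := by linarith
  have hDt : D < t := by
    have h4 : D < 4 * D := by linarith
    linarith
  refine ⟨hρ't, ?_, hri⟩
  -- intersection point
  have ht0 : 0 < t := lt_trans hD0 hDt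
  refine ⟨q + (D / t) • (c i - q), ?_, ?_⟩
  · rw [Metric.mem_closedBall, dist_eq_norm]
    have : q + (D / t) • (c i - q) - c i = (D / t - 1) • (c i - q) := by
      rw [sub_smul, one_smul]; abel
    rw [this, norm_smul]
    have hnorm : ‖c i - q‖ = t := by rw [ht, norm_sub_rev]
    rw [hnorm, Real.norm_eq_abs]
    have habs : |D / t - 1| = 1 - D / t := by
      rw [abs_of_nonpos]; ring
      have : D / t < 1 := (div_lt_one ht0).mpr hDt
      linarith
    rw [habs]
    have : (1 - D / t) * t = t - D := by field_simp
    rw [this]; linarith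
  · rw [Metric.mem_closedBall, dist_eq_norm]
    have : q + (D / t) • (c i - q) - q = (D / t) • (c i - q) := by abel
    rw [this, norm_smul]
    have hnorm : ‖c i - q‖ = t := by rw [ht, norm_sub_rev]
    rw [hnorm, Real.norm_eq_abs, abs_of_nonneg (div_nonneg hD0.le ht0.le)]
    rw [div_mul_cancel₀ _ (ne_of_gt ht0)]
end
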